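/- arXiv:1202.0847 — 5 statements merged into one kernel-verified Lean document; each statement's English description precedes it below -/
import Mathlib

section
/- Let G be a 2-connected graph with n vertices and let v be a vertex of G. Let C be a set of i ≤ n−2 vertices of G with v ∉ C such that both induced subgraphs G[C] and G[V(G)∖C] are connected. Then there exists a vertex u ∈ V(G)∖(C ∪ {v}) such that both G[C ∪ {u}] and G[V(G)∖(C ∪ {u})] are connected. -/
/-!
Among the vertices outside `C ∪ {v}` with a neighbour in `C` (there is one, since `G - v` is
connected), pick `u` farthest from `v` in `G[Cᶜ]`. Then `C ∪ {u}` is clearly connected. For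
`Cᶜ \ {u}`, suppose some vertex is not joined to `v` there. A path to `v` in the connected graph
`G - u` leaves its component through an edge into `C`, so the component contains a vertex `z ≠ v`
with a neighbour in `C`. By the choice of `u`, a shortest `v`–`z` path in `G[Cᶜ]` cannot pass
through `u`, because `u` would then be strictly closer to `v` than `z`; so that path joins `z` to
`v` inside `Cᶜ \ {u}`, a contradiction.
-/

open SimpleGraph

/-- A graph is 2-connected: it has at least 3 vertices and removing any single
vertex leaves a connected graph. -/
def TwoConnected {V : Type*} [Fintype V] (G : SimpleGraph V) : Prop :=
  3 ≤ Fintype.card V ∧ ∀ v : V, (G.induce ({v}ᶜ : Set V)).Connected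

namespace SimpleGraph

variable {V : Type*} {G : SimpleGraph V}

theorem Walk.dist_lt_of_mem_support_of_length_eq_dist {a b u : V} (P : G.Walk a b)
    (hP : P.length = G.dist a b) (hu : u ∈ P.support) (hub : u ≠ b) :
    G.dist a u < G.dist a b := by
  classical
  have hsplit := congrArg Walk.length (P.take_spec hu)
  rw [Walk.length_append] at hsplit
  have htake := G.dist_le (P.takeUntil u hu)
  have hdrop := G.dist_le (P.dropUntil u hu)
  have hub_pos := (P.dropUntil u hu).reachable.pos_dist_of_ne hub
  omega

theorem Reachable.exists_walk_of_induce {s : Set V} {a b : V} {ha : a ∈ s} {hb : b ∈ s}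
    (h : (G.induce s).Reachable ⟨a, ha⟩ ⟨b, hb⟩) :
    ∃ W : G.Walk a b, ∀ x ∈ W.support, x ∈ s := by
  obtain ⟨W⟩ := h
  refine ⟨W.map (Embedding.induce s).toHom, fun x hx => ?_⟩
  -- `hx` mentions the endpoints `a`, `b` rather than their images, which `Walk.support_map` needs
  replace hx : x ∈ (W.map (Embedding.induce s).toHom).support := hx
  rw [Walk.support_map, List.mem_map] at hx
  obtain ⟨y, -, rfl⟩ := hx
  exact y.2

theorem Walk.exists_adj_notMem_of_not_reachable_induce {s : Set V} {x y : V}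
    (W : G.Walk x y) (hx : x ∈ s) (hy : y ∈ s)
    (h : ¬(G.induce s).Reachable ⟨x, hx⟩ ⟨y, hy⟩) :
    ∃ z w, ∃ hz : z ∈ s, (G.induce s).Reachable ⟨x, hx⟩ ⟨z, hz⟩ ∧
      w ∈ W.support ∧ w ∉ s ∧ G.Adj z w := by
  obtain ⟨d, hd, ⟨hzs, hxz⟩, hwK⟩ := W.exists_boundary_dart
    {z | ∃ hz : z ∈ s, (G.induce s).Reachable ⟨x, hx⟩ ⟨z, hz⟩} ⟨hx, Reachable.refl _⟩
    (fun ⟨_, hxy⟩ => h hxy)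
  exact ⟨d.fst, d.snd, hzs, hxz, W.dart_snd_mem_support_of_mem_darts hd,
    fun hws => hwK ⟨hws, hxz.trans (induce_adj.2 d.adj).reachable⟩, d.adj⟩

theorem reachable_induce_diff_singleton_of_dist_le {D : Set V}
    (hD : (G.induce D).Preconnected) {a b u : V} (ha : a ∈ D) (hb : b ∈ D) (hu : u ∈ D)
    (hau : a ≠ u) (hbu : b ≠ u)
    (hdist : (G.induce D).dist ⟨a, ha⟩ ⟨b, hb⟩ ≤ (G.induce D).dist ⟨a, ha⟩ ⟨u, hu⟩) :
    (G.induce (D \ {u})).Reachable ⟨a, ha, hau⟩ ⟨b, hb, hbu⟩ := by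
  obtain ⟨P, hP⟩ := (hD ⟨a, ha⟩ ⟨b, hb⟩).exists_walk_length_eq_dist
  have huP : (⟨u, hu⟩ : D) ∉ P.support := fun huP =>
    (P.dist_lt_of_mem_support_of_length_eq_dist hP huP
      (fun h => hbu (congrArg Subtype.val h).symm)).not_ge hdist
  refine ⟨(P.map (Embedding.induce D).toHom).induce (D \ {u}) fun x hx => ?_⟩
  simp only [Walk.support_map, List.mem_map] at hx
  obtain ⟨y, hy, rfl⟩ := hx
  refine ⟨y.2, fun hyu => huP ?_⟩
  obtain rfl : y = ⟨u, hu⟩ := Subtype.ext hyu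
  exact hy

theorem preconnected_induce_diff_singleton_of_forall_dist_le {D : Set V}
    (hD : (G.induce D).Preconnected) {u v : V} (hu : u ∈ D) (hv : v ∈ D) (hvu : v ≠ u)
    (hGu : (G.induce {u}ᶜ).Preconnected)
    (hmax : ∀ z (hz : z ∈ D), z ≠ v → (∃ c ∉ D, G.Adj z c) →
      (G.induce D).dist ⟨v, hv⟩ ⟨z, hz⟩ ≤ (G.induce D).dist ⟨v, hv⟩ ⟨u, hu⟩) :
    (G.induce (D \ {u})).Preconnected := by
  suffices hbase : ∀ x (hx : x ∈ D \ {u}),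
      (G.induce (D \ {u})).Reachable ⟨x, hx⟩ ⟨v, hv, hvu⟩ from
    fun a b => (hbase a a.2).trans (hbase b b.2).symm
  intro x hx
  by_contra hxv
  obtain ⟨W, hW⟩ := Reachable.exists_walk_of_induce
    (hGu (⟨x, hx.2⟩ : ({u}ᶜ : Set V)) ⟨v, hvu⟩)
  obtain ⟨z, w, hz, hxz, hwW, hwE, hzw⟩ :=
    W.exists_adj_notMem_of_not_reachable_induce hx ⟨hv, hvu⟩ hxv
  have hzv : z ≠ v := by
    rintro rfl
    exact hxv hxz
  have hwD : w ∉ D := fun hw => hwE ⟨hw, hW w hwW⟩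
  have hvz := reachable_induce_diff_singleton_of_dist_le hD hv hz.1 hu hvu hz.2
    (hmax z hz.1 hzv ⟨w, hwD, hzw⟩)
  exact hxv (hxz.trans hvz.symm)

end SimpleGraph

theorem stmt0 {V : Type*} [Fintype V] (G : SimpleGraph V)
    (h2 : TwoConnected G) (v : V) (C : Set V) (hvC : v ∉ C)
    (hcard : C.ncard ≤ Fintype.card V - 2)
    (hC : (G.induce C).Preconnected)
    (hCc : (G.induce (Cᶜ : Set V)).Preconnected) :
    ∃ u : V, u ∉ C ∧ u ≠ v ∧
      (G.induce ((C ∪ {u}) : Set V)).Preconnected ∧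
      (G.induce (((C ∪ {u})ᶜ) : Set V)).Preconnected := by
  obtain ⟨hcard3, hGv⟩ := h2
  have hCc_card : 1 < Cᶜ.ncard := by
    have := C.ncard_add_ncard_compl
    rw [Nat.card_eq_fintype_card] at this
    omega
  obtain ⟨d, hdC, hdv⟩ := Set.exists_ne_of_one_lt_ncard hCc_card v
  rcases C.eq_empty_or_nonempty with rfl | ⟨c₀, hc₀⟩
  · refine ⟨d, Set.notMem_empty d, hdv, ?_, ?_⟩ <;> rw [Set.empty_union]
    exacts [Preconnected.of_subsingleton, (hGv d).preconnected]
  let S : Set (Cᶜ : Set V) := {z | z.1 ≠ v ∧ ∃ c ∈ C, G.Adj z c}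
  have hS : S.Nonempty := by
    obtain ⟨W, hW⟩ := Reachable.exists_walk_of_induce
      ((hGv v).preconnected (⟨d, hdv⟩ : ({v}ᶜ : Set V)) ⟨c₀, fun h => hvC (h ▸ hc₀)⟩)
    obtain ⟨e, he, hzC, hcC⟩ := W.exists_boundary_dart Cᶜ hdC (not_not.2 hc₀)
    exact ⟨⟨e.fst, hzC⟩, hW _ (W.dart_fst_mem_support_of_mem_darts he),
      e.snd, not_not.1 hcC, e.adj⟩
  obtain ⟨⟨u, huC⟩, ⟨huv, c, hc, huc⟩, hmax⟩ :=
    S.exists_max_image (fun z => (G.induce Cᶜ).dist ⟨v, hvC⟩ z) S.toFinite hS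
  refine ⟨u, huC, huv,
    (connected_induce_union (t := {u}) hC Preconnected.of_subsingleton hc rfl huc.symm).1, ?_⟩
  rw [Set.compl_union, ← Set.sdiff_eq]
  exact preconnected_induce_diff_singleton_of_forall_dist_le hCc huC hvC (Ne.symm huv)
    (hGv u).preconnected fun z hz hzv ⟨c, hc, hzc⟩ => hmax ⟨z, hz⟩ ⟨hzv, c, not_not.1 hc, hzc⟩
end

section
/- Let G be a connected graph such that every cut vertex of G separates G into exactly two components and every 2-connected block of G contains at most two cut vertices of G. Then there exists an ordering v₁, …, vₙ of all vertices of G such that for every i with 1 ≤ i ≤ n−1, both the induced subgraph on {v₁,…,vᵢ} and the induced subgraph on {v_{i+1},…,vₙ} are connected. -/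
open SimpleGraph

/-- `v` is a cut vertex of `G`: removing it disconnects the graph. -/
def IsCutVertex {V : Type*} [Fintype V] (G : SimpleGraph V) (v : V) : Prop :=
  ¬ (G.induce ({v}ᶜ : Set V)).Preconnected

/-- The induced subgraph on `B` is connected and has no cut vertex of its own. -/
def NoCutVertexOn {V : Type*} [Fintype V] (G : SimpleGraph V) (B : Set V) : Prop :=
  (G.induce B).Connected ∧ ∀ b ∈ B, (G.induce ((B \ {b}) : Set V)).Preconnected

/-- `B` is a block of `G`: a maximal vertex set inducing a subgraph
with no cut vertex of its own. -/
def IsBlock {V : Type*} [Fintype V] (G : SimpleGraph V) (B : Set V) : Prop :=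
  NoCutVertexOn G B ∧ ∀ B' : Set V, B ⊆ B' → NoCutVertexOn G B' → B' = B

/-!
The hypotheses make the block-cut tree of `G` a path. Call a component of `G - v`, for a cut
vertex `v`, a branch at `v`. Pick `s` and `t`, not cut vertices, in two disjoint branches free of
cut vertices. A cut vertex not separating `s` from `t` would have a branch containing both of
them, and descending through the blocks inside that branch one would meet a block with three cut
vertices. So every cut vertex separates `s` from `t`, i.e. `G + st` is 2-connected, and the
required ordering is an `st`-ordering. It is built from its end: remove a target vertex that
separates nothing, make its neighbours targets, and recurse.
-/

lemma List.Nodup.exists_finEquiv_take_drop {α : Type*} [Fintype α] {l : List α}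
    (hnd : l.Nodup) (hl : ∀ z, z ∈ l) :
    ∃ e : Fin (Fintype.card α) ≃ α, ∀ i : Fin (Fintype.card α),
      {x | ∃ j, j ≤ i ∧ e j = x} = {z | z ∈ l.take (i + 1)} ∧
      {x | ∃ j, i < j ∧ e j = x} = {z | z ∈ l.drop (i + 1)} := by
  classical
  have hlen : l.length = Fintype.card α := by
    simpa using Fintype.card_congr (hnd.getEquivOfForallMemList l hl)
  refine ⟨(finCongr hlen.symm).trans (hnd.getEquivOfForallMemList l hl), fun i => ?_⟩
  constructor <;> ext x <;>
    simp only [Equiv.trans_apply, finCongr_apply, List.Nodup.getEquivOfForallMemList_apply,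
      Fin.val_cast, List.get_eq_getElem, Set.mem_ofPred_eq, List.mem_take_iff_getElem,
      List.mem_drop_iff_getElem, Fin.le_def, Fin.lt_def]
  · constructor
    · rintro ⟨j, hji, rfl⟩
      exact ⟨j, by omega, rfl⟩
    · rintro ⟨j, hj, rfl⟩
      exact ⟨⟨j, by omega⟩, by simp only; omega, rfl⟩
  · constructor
    · rintro ⟨j, hij, rfl⟩
      exact ⟨j - (i + 1), by omega, by congr 1; omega⟩
    · rintro ⟨j, hj, rfl⟩
      exact ⟨⟨i + 1 + j, by omega⟩, by simp only; omega, rfl⟩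

namespace SimpleGraph

variable {V : Type*} {G : SimpleGraph V}

/-- Reachability in `G.induce S`, phrased for vertices of `V` rather than of the subtype. -/
def ReachIn (G : SimpleGraph V) (S : Set V) (x y : V) : Prop :=
  ∃ w : G.Walk x y, ∀ z ∈ w.support, z ∈ S

def PreconnectedOn (G : SimpleGraph V) (S : Set V) : Prop :=
  ∀ x ∈ S, ∀ y ∈ S, G.ReachIn S x y

def componentIn (G : SimpleGraph V) (S : Set V) (x : V) : Set V :=
  {z | G.ReachIn S x z}

section Reachability

variable {S T B : Set V} {x y z a v : V}

lemma Adj.reachIn (h : G.Adj x y) (hx : x ∈ S) (hy : y ∈ S) : G.ReachIn S x y :=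
  ⟨h.toWalk, by simp [hx, hy]⟩

namespace ReachIn

lemma mem_left (h : G.ReachIn S x y) : x ∈ S :=
  let ⟨w, hw⟩ := h; hw x w.start_mem_support

lemma mem_right (h : G.ReachIn S x y) : y ∈ S :=
  let ⟨w, hw⟩ := h; hw y w.end_mem_support

lemma refl (hx : x ∈ S) : G.ReachIn S x x :=
  ⟨.nil, by simpa using hx⟩

lemma symm (h : G.ReachIn S x y) : G.ReachIn S y x :=
  let ⟨w, hw⟩ := h; ⟨w.reverse, by simpa using hw⟩

lemma trans (h : G.ReachIn S x y) (h' : G.ReachIn S y z) : G.ReachIn S x z := by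
  obtain ⟨w, hw⟩ := h
  obtain ⟨w', hw'⟩ := h'
  refine ⟨w.append w', fun u hu => ?_⟩
  rcases (Walk.mem_support_append_iff w w').mp hu with hu | hu
  exacts [hw u hu, hw' u hu]

lemma mono (hST : S ⊆ T) (h : G.ReachIn S x y) : G.ReachIn T x y :=
  let ⟨w, hw⟩ := h; ⟨w, fun u hu => hST (hw u hu)⟩

lemma diff_singleton (h : G.ReachIn S x z) (ha : ¬ G.ReachIn S x a) :
    G.ReachIn (S \ {a}) x z := by
  classical
  obtain ⟨w, hw⟩ := h
  refine ⟨w, fun u hu => ⟨hw u hu, ?_⟩⟩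
  rintro rfl
  exact ha ⟨w.takeUntil u hu, fun r hr => hw r (w.support_takeUntil_subset_support hu hr)⟩

lemma exists_adj_mem (h : G.ReachIn S x y) (hx : x ∉ B) (hy : y ∈ B) :
    ∃ c b, b ∈ B ∧ b ∈ S ∧ G.Adj c b ∧ G.ReachIn (S \ B) x c := by
  obtain ⟨w, hw⟩ := h
  induction w with
  | nil => exact absurd hy hx
  | @cons x u y hxu w ih =>
    have hxS : x ∈ S \ B := ⟨hw x (by simp), hx⟩
    by_cases hu : u ∈ B
    · exact ⟨x, u, hu, hw u (by simp), hxu, refl hxS⟩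
    · obtain ⟨c, b, hb, hbS, hcb, hxc⟩ := ih hu hy (fun z hz => hw z (by simp [hz]))
      exact ⟨c, b, hb, hbS, hcb, (hxu.reachIn hxS hxc.mem_left).trans hxc⟩

lemma exists_adj_of_ne (h : G.ReachIn S x v) (hxv : x ≠ v) :
    ∃ c, G.ReachIn (S \ {v}) x c ∧ G.Adj c v := by
  obtain ⟨c, b, rfl, -, hcb, hxc⟩ := h.exists_adj_mem (B := {v}) hxv rfl
  exact ⟨c, hxc, hcb⟩

lemma reachable (h : G.ReachIn S x y) :
    (G.induce S).Reachable ⟨x, h.mem_left⟩ ⟨y, h.mem_right⟩ := by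
  obtain ⟨w, hw⟩ := h
  induction w with
  | nil => rfl
  | @cons x u y hxu w ih =>
    have hu : u ∈ S := hw u (by simp)
    have hxu' : (G.induce S).Adj ⟨x, hw x (by simp)⟩ ⟨u, hu⟩ := hxu
    exact hxu'.reachable.trans (ih fun z hz => hw z (by simp [hz]))

end ReachIn

lemma reachIn_iff_reachable {x y : S} : G.ReachIn S x y ↔ (G.induce S).Reachable x y := by
  refine ⟨fun h => h.reachable, fun ⟨w⟩ => ⟨w.map (Embedding.induce S).toHom, fun z hz => ?_⟩⟩
  obtain ⟨⟨z, hzS⟩, -, rfl⟩ := List.mem_map.mp (Walk.support_map _ w ▸ hz)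
  exact hzS

lemma preconnected_induce_iff_preconnectedOn :
    (G.induce S).Preconnected ↔ G.PreconnectedOn S :=
  ⟨fun h x hx y hy => reachIn_iff_reachable.mpr (h ⟨x, hx⟩ ⟨y, hy⟩),
    fun h x y => reachIn_iff_reachable.mp (h x x.2 y y.2)⟩

lemma connected_induce_iff_preconnectedOn :
    (G.induce S).Connected ↔ S.Nonempty ∧ G.PreconnectedOn S := by
  rw [connected_iff, preconnected_induce_iff_preconnectedOn, Set.nonempty_coe_sort, and_comm]

lemma PreconnectedOn.of_reachIn (h : ∀ x ∈ S, G.ReachIn S x v) : G.PreconnectedOn S :=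
  fun x hx y hy => (h x hx).trans (h y hy).symm

lemma mem_componentIn_self (hx : x ∈ S) : x ∈ G.componentIn S x :=
  ReachIn.refl hx

lemma componentIn_subset : G.componentIn S x ⊆ S :=
  fun _ h => ReachIn.mem_right h

lemma ReachIn.reachIn_componentIn (h : G.ReachIn S x z) :
    G.ReachIn (G.componentIn S x) x z := by
  classical
  obtain ⟨w, hw⟩ := h
  exact ⟨w, fun u hu =>
    ⟨w.takeUntil u hu, fun r hr => hw r (w.support_takeUntil_subset_support hu hr)⟩⟩

lemma componentIn_subset_componentIn (h : G.componentIn S x ⊆ T) :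
    G.componentIn S x ⊆ G.componentIn T x :=
  fun _ hz => (ReachIn.reachIn_componentIn hz).mono h

lemma componentIn_eq_of_mem (h : z ∈ G.componentIn S x) :
    G.componentIn S z = G.componentIn S x := by
  ext u
  exact ⟨fun hu => ReachIn.trans h hu, fun hu => ReachIn.trans (ReachIn.symm h) hu⟩

lemma componentIn_subset_componentIn_of_mem (h : G.componentIn S x ⊆ T)
    (hx : x ∈ G.componentIn T y) : G.componentIn S x ⊆ G.componentIn T y :=
  (componentIn_subset_componentIn h).trans (componentIn_eq_of_mem hx).le

lemma Walk.reachIn_support_start {x y z : V} (w : G.Walk x y) (hz : z ∈ w.support) :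
    G.ReachIn {t | t ∈ w.support} z x := by
  classical
  exact ⟨(w.takeUntil z hz).reverse, fun t ht =>
    w.support_takeUntil_subset_support hz (by simpa using ht)⟩

lemma Walk.IsPath.reachIn_support_diff {x y z e : V} {w : G.Walk x y} (hw : w.IsPath)
    (hz : z ∈ w.support) (hze : z ≠ e) :
    G.ReachIn ({t | t ∈ w.support} \ {e}) z x ∨ G.ReachIn ({t | t ∈ w.support} \ {e}) z y := by
  classical
  by_cases he : e ∈ (w.takeUntil z hz).support
  · refine .inr ⟨w.dropUntil z hz, fun t ht => ⟨w.support_dropUntil_subset_support hz ht, ?_⟩⟩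
    rintro rfl
    have hnd : ((w.takeUntil z hz).support ++ (w.dropUntil z hz).support.tail).Nodup := by
      rw [← Walk.support_append, w.take_spec hz]
      exact hw.support_nodup
    rw [← Walk.cons_tail_support] at ht
    rcases List.mem_cons.mp ht with rfl | ht
    exacts [hze rfl, List.disjoint_of_nodup_append hnd he ht]
  · refine .inl ⟨(w.takeUntil z hz).reverse, fun t ht => ?_⟩
    rw [Walk.support_reverse, List.mem_reverse] at ht
    exact ⟨w.support_takeUntil_subset_support hz ht, fun h => he (h ▸ ht)⟩

end Reachability

section Ordering

variable {S A : Set V} {s v w x u : V}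

lemma PreconnectedOn.reachIn_diff_componentIn (hS : G.PreconnectedOn S) (hv : v ∈ S) {r : V}
    (hr : r ∈ S) (hrK : r ∉ G.componentIn (S \ {v}) x) :
    G.ReachIn (S \ G.componentIn (S \ {v}) x) r v := by
  set K := G.componentIn (S \ {v}) x
  have hvK : v ∉ K := fun h => (componentIn_subset h).2 rfl
  by_cases hrv : r = v
  · subst hrv
    exact ReachIn.refl ⟨hv, hvK⟩
  obtain ⟨c, hrc, hcv⟩ := (hS r hr v hv).exists_adj_of_ne hrv
  have hrc' : G.ReachIn (S \ K) r c := by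
    refine hrc.reachIn_componentIn.mono fun t ht => ⟨(componentIn_subset ht).1, fun htK => ?_⟩
    exact hrK (ReachIn.trans htK (ReachIn.symm ht))
  exact hrc'.trans (hcv.reachIn hrc'.mem_right ⟨hv, hvK⟩)

lemma PreconnectedOn.componentIn_ssubset (hS : G.PreconnectedOn S) (hv : v ∈ S)
    (hw : w ∈ G.componentIn (S \ {v}) x) (hu : ¬ G.ReachIn (S \ {w}) u v) :
    G.componentIn (S \ {w}) u ⊂ G.componentIn (S \ {v}) x := by
  refine ⟨fun z hz => ?_, fun h => ((componentIn_subset (h hw)).2 rfl)⟩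
  by_contra hzK
  have hzS : z ∈ S := (componentIn_subset hz).1
  refine hu (ReachIn.trans hz ((hS.reachIn_diff_componentIn hv hzS hzK).mono ?_))
  exact Set.sdiff_subset_sdiff_right (Set.singleton_subset_iff.mpr hw)

/-- For `A = {t}` this says that `G[S] + st - v` is connected for every vertex `v` of `S`. -/
def ReachesEndsAfterDeletion (G : SimpleGraph V) (S : Set V) (s : V) (A : Set V) : Prop :=
  ∀ v ∈ S, ∀ x ∈ S \ {v}, G.ReachIn (S \ {v}) x s ∨ ∃ a ∈ A, G.ReachIn (S \ {v}) x a

/-- The target `a` is found in a component of some `S - v` avoiding `s`, of least size;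
minimality makes `a` a non-separating vertex of `S`. -/
lemma ReachesEndsAfterDeletion.exists_preconnectedOn_diff [Finite V]
    (hA : G.ReachesEndsAfterDeletion S s A) (hS : G.PreconnectedOn S) (hs : s ∈ S)
    (hx : x ∈ S) (hxs : x ≠ s) :
    ∃ a ∈ A, a ∈ S ∧ a ≠ s ∧ G.PreconnectedOn (S \ {a}) := by
  let P : V × V → Prop := fun p =>
    p.1 ∈ S ∧ p.2 ∈ S \ {p.1} ∧ s ∉ G.componentIn (S \ {p.1}) p.2
  have hP : P (s, x) := ⟨hs, ⟨hx, hxs⟩, fun h => (componentIn_subset h).2 rfl⟩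
  obtain ⟨⟨v, x⟩, ⟨hv, hx, hsK⟩, hmin⟩ := Set.Finite.exists_minimalFor
    (fun p : V × V => (G.componentIn (S \ {p.1}) p.2).ncard) {p | P p} (Set.toFinite _) ⟨_, hP⟩
  obtain ⟨a, haA, hxa⟩ := (hA v hv x hx).resolve_left hsK
  have haS : a ∈ S \ {v} := hxa.mem_right
  refine ⟨a, haA, haS.1, fun h => hsK (h ▸ hxa), .of_reachIn (v := v) fun u hu => ?_⟩
  by_contra huv
  have hsub := hS.componentIn_ssubset hv hxa huv
  have hlt := Set.ncard_lt_ncard hsub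
  exact hlt.not_ge (hmin (show P (a, u) from ⟨haS.1, hu, fun h => hsK (hsub.1 h)⟩) hlt.le)

lemma ReachesEndsAfterDeletion.diff_singleton (hA : G.ReachesEndsAfterDeletion S s A)
    {a : V} (ha : a ∈ A) : G.ReachesEndsAfterDeletion (S \ {a}) s (A ∪ G.neighborSet a) := by
  intro v hv x hx
  rw [Set.sdiff_sdiff_comm]
  have hx' : x ∈ S \ {v} := ⟨hx.1.1, hx.2⟩
  by_cases hxa : G.ReachIn (S \ {v}) x a
  · obtain ⟨c, b, rfl, -, hcb, hxc⟩ := hxa.exists_adj_mem (B := {a}) hx.1.2 rfl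
    exact .inr ⟨c, .inr hcb.symm, hxc⟩
  · rcases hA v hv.1 x hx' with hxs | ⟨b, hb, hxb⟩
    exacts [.inl (hxs.diff_singleton hxa), .inr ⟨b, .inl hb, hxb.diff_singleton hxa⟩]

def IsTargetOrdering (G : SimpleGraph V) (S A : Set V) (l : List V) : Prop :=
  l.Nodup ∧ (∀ z, z ∈ l ↔ z ∈ S) ∧
    (∀ k, 0 < k → G.PreconnectedOn {z | z ∈ l.take k}) ∧
    (∀ k, 0 < k → ∀ x ∈ l.drop k, ∃ a ∈ A, G.ReachIn {z | z ∈ l.drop k} x a)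

lemma isTargetOrdering_singleton : G.IsTargetOrdering {s} A [s] := by
  refine ⟨List.nodup_singleton s, by simp, fun k hk => ?_, fun k hk x hx => ?_⟩
  · obtain ⟨k, rfl⟩ := Nat.exists_eq_add_one_of_ne_zero hk.ne'
    simpa using PreconnectedOn.of_reachIn (G := G) (S := {s}) (v := s) fun x hx => hx ▸ .refl rfl
  · obtain ⟨k, rfl⟩ := Nat.exists_eq_add_one_of_ne_zero hk.ne'
    simp at hx

lemma IsTargetOrdering.append_singleton {a : V} {l : List V}
    (hl : G.IsTargetOrdering (S \ {a}) (A ∪ G.neighborSet a) l) (hS : G.PreconnectedOn S)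
    (haS : a ∈ S) (haA : a ∈ A) : G.IsTargetOrdering S A (l ++ [a]) := by
  obtain ⟨hnd, hl, hpre, hsuf⟩ := hl
  have hl' : ∀ z, z ∈ l ++ [a] ↔ z ∈ S := fun z => by
    by_cases hza : z = a <;> simp [hl, hza, haS]
  refine ⟨hnd.append (List.nodup_singleton a) (by simpa using fun h => ((hl a).mp h).2 rfl),
    hl', fun k hk => ?_, fun k hk y hy => ?_⟩
  · rcases le_or_gt k l.length with hkl | hkl
    · simpa [List.take_append_of_le_length hkl] using hpre k hk
    · rw [List.take_of_length_le (by simp; omega)]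
      simpa only [hl', Set.ofPred_mem_eq] using hS
  rcases le_or_gt k l.length with hkl | hkl
  · rw [List.drop_append_of_le_length hkl] at hy ⊢
    have ha : a ∈ {z | z ∈ l.drop k ++ [a]} := by simp
    have hsub : {z | z ∈ l.drop k} ⊆ {z | z ∈ l.drop k ++ [a]} :=
      fun z hz => List.mem_append_left _ hz
    rcases List.mem_append.mp hy with hy | hy
    · obtain ⟨b, hb | hab, hyb⟩ := hsuf k hk y hy
      · exact ⟨b, hb, hyb.mono hsub⟩
      · exact ⟨a, haA, (hyb.mono hsub).trans (hab.symm.reachIn (hsub hyb.mem_right) ha)⟩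
    · obtain rfl : y = a := List.mem_singleton.mp hy
      exact ⟨y, haA, .refl ha⟩
  · simp [List.drop_eq_nil_of_le (by simp; omega : (l ++ [a]).length ≤ k)] at hy

theorem ReachesEndsAfterDeletion.exists_isTargetOrdering [Finite V]
    (hA : G.ReachesEndsAfterDeletion S s A) (hS : G.PreconnectedOn S) (hs : s ∈ S) :
    ∃ l, G.IsTargetOrdering S A l := by
  obtain ⟨n, hn⟩ : ∃ n, S.ncard = n + 1 :=
    ⟨S.ncard - 1, by have := (Set.ncard_pos (Set.toFinite S)).mpr ⟨s, hs⟩; omega⟩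
  induction n generalizing S A with
  | zero =>
    obtain ⟨c, rfl⟩ := Set.ncard_eq_one.mp hn
    obtain rfl : s = c := hs
    exact ⟨[s], isTargetOrdering_singleton⟩
  | succ n ih =>
    obtain ⟨x, hx, hxs⟩ := Set.exists_ne_of_one_lt_ncard (s := S) (by omega) s
    obtain ⟨a, haA, haS, has, hS'⟩ := hA.exists_preconnectedOn_diff hS hs hx hxs
    obtain ⟨l, hl⟩ := ih (hA.diff_singleton haA) hS' ⟨hs, has.symm⟩
      (by rw [Set.ncard_sdiff_singleton_of_mem haS]; omega)
    exact ⟨l ++ [a], hl.append_singleton hS haS haA⟩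

end Ordering

section CutVertex

variable {u v w x y s t : V}

lemma Connected.preconnectedOn_univ (hG : G.Connected) : G.PreconnectedOn Set.univ :=
  fun x _ y _ => let ⟨w⟩ := hG.preconnected x y; ⟨w, fun _ _ => trivial⟩

lemma Connected.exists_adj_mem_componentIn (hG : G.Connected) (hx : x ≠ v) :
    ∃ c ∈ G.componentIn {v}ᶜ x, G.Adj c v := by
  obtain ⟨c, hxc, hcv⟩ :=
    (hG.preconnectedOn_univ x trivial v trivial).exists_adj_of_ne hx
  exact ⟨c, hxc.mono fun z hz => hz.2, hcv⟩

lemma Connected.insert_componentIn_subset (hG : G.Connected) (hy : y ≠ v) (hvb : v ≠ w)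
    (hK : G.componentIn {v}ᶜ y ⊆ {w}ᶜ) (hyM : y ∈ G.componentIn {w}ᶜ x) :
    insert v (G.componentIn {v}ᶜ y) ⊆ G.componentIn {w}ᶜ x := by
  have hKM := componentIn_subset_componentIn_of_mem hK hyM
  refine Set.insert_subset_iff.mpr ⟨?_, hKM⟩
  obtain ⟨c, hc, hcv⟩ := hG.exists_adj_mem_componentIn hy
  exact ReachIn.trans (hKM hc) (hcv.reachIn (componentIn_subset (hKM hc)) hvb)

lemma Connected.componentIn_ssubset (hG : G.Connected) (hw : w ∈ G.componentIn {v}ᶜ x)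
    (hu : ¬ G.ReachIn {w}ᶜ u v) : G.componentIn {w}ᶜ u ⊂ G.componentIn {v}ᶜ x := by
  simp only [Set.compl_eq_univ_sdiff] at hw hu ⊢
  exact hG.preconnectedOn_univ.componentIn_ssubset (Set.mem_univ v) hw hu

lemma reachIn_or_reachIn_of_card_eq_two
    (hv : Nat.card (G.induce {v}ᶜ).ConnectedComponent = 2)
    (hx : x ≠ v) (hs : s ≠ v) (ht : t ≠ v) (hst : ¬ G.ReachIn {v}ᶜ s t) :
    G.ReachIn {v}ᶜ x s ∨ G.ReachIn {v}ᶜ x t := by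
  by_contra! h
  have : Finite (G.induce {v}ᶜ).ConnectedComponent := Nat.finite_of_card_ne_zero (by omega)
  have hne : ∀ {a b : V} (ha : a ≠ v) (hb : b ≠ v), ¬ G.ReachIn {v}ᶜ a b →
      (G.induce {v}ᶜ).connectedComponentMk ⟨a, ha⟩ ≠
        (G.induce {v}ᶜ).connectedComponentMk ⟨b, hb⟩ :=
    fun _ _ h e => h (reachIn_iff_reachable.mpr (ConnectedComponent.eq.mp e))
  have h3 := Set.ncard_eq_three.mpr
    ⟨_, _, _, hne hx hs h.1, hne hx ht h.2, hne hs ht hst, rfl⟩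
  have := h3 ▸ Set.ncard_le_card _
  omega

variable [Fintype V]

lemma isCutVertex_iff_exists_not_reachIn :
    IsCutVertex G v ↔ ∃ x y, x ≠ v ∧ y ≠ v ∧ ¬ G.ReachIn {v}ᶜ x y := by
  simp [IsCutVertex, preconnected_induce_iff_preconnectedOn, PreconnectedOn]

lemma reachIn_of_not_isCutVertex (hv : ¬ IsCutVertex G v) (hx : x ≠ v) (hy : y ≠ v) :
    G.ReachIn {v}ᶜ x y := by
  by_contra h
  exact hv (isCutVertex_iff_exists_not_reachIn.mpr ⟨x, y, hx, hy, h⟩)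

lemma IsCutVertex.exists_not_reachIn (hv : IsCutVertex G v) (x : V) :
    ∃ u, u ≠ v ∧ ¬ G.ReachIn {v}ᶜ x u := by
  obtain ⟨y, z, hy, hz, hyz⟩ := isCutVertex_iff_exists_not_reachIn.mp hv
  by_contra! h
  exact hyz ((h y hy).symm.trans (h z hz))

/-- Take a smallest branch inside the given one. -/
lemma Connected.exists_componentIn_subset_not_isCutVertex (hG : G.Connected)
    (hv : IsCutVertex G v) (hx : x ≠ v) :
    ∃ v' x', IsCutVertex G v' ∧ x' ≠ v' ∧ G.componentIn {v'}ᶜ x' ⊆ G.componentIn {v}ᶜ x ∧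
      ∀ z ∈ G.componentIn {v'}ᶜ x', ¬ IsCutVertex G z := by
  let P : V × V → Prop := fun p =>
    IsCutVertex G p.1 ∧ p.2 ≠ p.1 ∧ G.componentIn {p.1}ᶜ p.2 ⊆ G.componentIn {v}ᶜ x
  obtain ⟨⟨v', x'⟩, hP, hmin⟩ := Set.Finite.exists_minimalFor
    (fun p : V × V => (G.componentIn {p.1}ᶜ p.2).ncard) {p | P p} (Set.toFinite _)
    ⟨(v, x), hv, hx, subset_rfl⟩
  refine ⟨v', x', hP.1, hP.2.1, hP.2.2, fun z hz hzcut => ?_⟩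
  obtain ⟨u, huz, hu⟩ := hzcut.exists_not_reachIn v'
  have hsub := hG.componentIn_ssubset hz fun h => hu h.symm
  have hlt := Set.ncard_lt_ncard hsub
  exact hlt.not_ge (hmin (show P (z, u) from ⟨hzcut, huz, hsub.1.trans hP.2.2⟩) hlt.le)

end CutVertex

section Block

variable [Fintype V] {B : Set V} {a b u v y : V}

lemma noCutVertexOn_iff : NoCutVertexOn G B ↔
    B.Nonempty ∧ G.PreconnectedOn B ∧ ∀ b ∈ B, G.PreconnectedOn (B \ {b}) := by
  simp only [NoCutVertexOn, connected_induce_iff_preconnectedOn,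
    preconnected_induce_iff_preconnectedOn, and_assoc]

lemma NoCutVertexOn.exists_isBlock_superset (h : NoCutVertexOn G B) :
    ∃ B', B ⊆ B' ∧ IsBlock G B' := by
  obtain ⟨B', ⟨hBB', hB'⟩, hmax⟩ := Set.Finite.exists_maximalFor Set.ncard
    {B' | B ⊆ B' ∧ NoCutVertexOn G B'} (Set.toFinite _) ⟨B, subset_rfl, h⟩
  refine ⟨B', hBB', hB', fun B'' hB'B'' hB'' => ?_⟩
  have hle := Set.ncard_le_ncard hB'B''
  exact (Set.eq_of_subset_of_ncard_le hB'B'' (hmax ⟨hBB'.trans hB'B'', hB''⟩ hle)).symm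

lemma noCutVertexOn_pair (h : G.Adj a b) : NoCutVertexOn G {a, b} := by
  refine noCutVertexOn_iff.mpr ⟨⟨a, by simp⟩, .of_reachIn (v := a) fun x hx => ?_,
    fun c hc x hx y hy => ?_⟩
  · rcases hx with rfl | rfl
    exacts [.refl (by simp), h.symm.reachIn (by simp) (by simp)]
  · obtain rfl : x = y := by
      rcases hc with rfl | rfl <;> rcases hx with ⟨rfl | rfl, hxc⟩ <;>
        rcases hy with ⟨rfl | rfl, hyc⟩ <;> simp_all
    exact .refl hx

lemma NoCutVertexOn.diff_subset_componentIn (hB : NoCutVertexOn G B) (hu : u ∈ B)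
    (huv : u ≠ v) : B \ {v} ⊆ G.componentIn {v}ᶜ u := by
  obtain ⟨-, hconn, hdel⟩ := noCutVertexOn_iff.mp hB
  intro z hz
  by_cases hv : v ∈ B
  · exact (hdel v hv u ⟨hu, huv⟩ z hz).mono fun t ht => ht.2
  · exact (hconn u hu z hz.1).mono fun t ht (htv : t = v) => hv (htv ▸ ht)

lemma NoCutVertexOn.union_support {b₁ b₂ c₁ c₂ : V} (hB : NoCutVertexOn G B)
    {w : G.Walk c₁ c₂} (hw : w.IsPath) (hwB : ∀ z ∈ w.support, z ∉ B) (hb₁ : b₁ ∈ B)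
    (hb₂ : b₂ ∈ B) (hb : b₁ ≠ b₂) (h₁ : G.Adj c₁ b₁) (h₂ : G.Adj c₂ b₂) :
    NoCutVertexOn G (B ∪ {z | z ∈ w.support}) := by
  set P : Set V := {z | z ∈ w.support}
  obtain ⟨-, hconn, hdel⟩ := noCutVertexOn_iff.mp hB
  have hP : G.PreconnectedOn P := .of_reachIn fun z hz => w.reachIn_support_start hz
  refine noCutVertexOn_iff.mpr ⟨⟨b₁, .inl hb₁⟩, .of_reachIn (v := b₁) fun z hz => ?_,
    fun e he => ?_⟩
  · rcases hz with hz | hz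
    · exact (hconn z hz b₁ hb₁).mono Set.subset_union_left
    · exact ((hP z hz c₁ w.start_mem_support).mono Set.subset_union_right).trans
        (h₁.reachIn (.inr w.start_mem_support) (.inl hb₁))
  rcases he with he | he
  · have hPe : P ⊆ (B ∪ P) \ {e} := fun z hz => ⟨.inr hz, fun h => hwB z hz (h ▸ he)⟩
    obtain ⟨c, b, hc, hb, hbe, hcb⟩ : ∃ c b, c ∈ P ∧ b ∈ B ∧ b ≠ e ∧ G.Adj c b := by
      by_cases hb₁e : b₁ = e
      · exact ⟨c₂, b₂, w.end_mem_support, hb₂, fun h => hb (hb₁e.trans h.symm), h₂⟩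
      · exact ⟨c₁, b₁, w.start_mem_support, hb₁, hb₁e, h₁⟩
    refine .of_reachIn (v := b) fun z hz => ?_
    rcases hz.1 with hzB | hzP
    · exact (hdel e he z ⟨hzB, hz.2⟩ b ⟨hb, hbe⟩).mono
        (Set.sdiff_subset_sdiff_left Set.subset_union_left)
    · exact ((hP z hzP c hc).mono hPe).trans (hcb.reachIn (hPe hc) ⟨.inl hb, hbe⟩)
  · have heB : e ∉ B := hwB e he
    have hBe : B ⊆ (B ∪ P) \ {e} := fun z hz => ⟨.inl hz, fun h => heB (h ▸ hz)⟩
    have hPe : P \ {e} ⊆ (B ∪ P) \ {e} := Set.sdiff_subset_sdiff_left Set.subset_union_right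
    refine .of_reachIn (v := b₁) fun z hz => ?_
    rcases hz.1 with hzB | hzP
    · exact (hconn z hzB b₁ hb₁).mono hBe
    rcases hw.reachIn_support_diff hzP hz.2 with hzc | hzc
    · exact (hzc.mono hPe).trans (h₁.reachIn (hPe hzc.mem_right) (hBe hb₁))
    · exact (hzc.mono hPe).trans ((h₂.reachIn (hPe hzc.mem_right) (hBe hb₂)).trans
        ((hconn b₂ hb₂ b₁ hb₁).mono hBe))

/-- Otherwise a path in `Bᶜ` from `c₁` to `c₂` would be an ear enlarging the block `B`. -/
lemma IsBlock.eq_of_adj_of_adj {b₁ b₂ c₁ c₂ : V} (hB : IsBlock G B) (hc : G.ReachIn Bᶜ c₁ c₂)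
    (hb₁ : b₁ ∈ B) (hb₂ : b₂ ∈ B) (h₁ : G.Adj c₁ b₁) (h₂ : G.Adj c₂ b₂) : b₁ = b₂ := by
  classical
  by_contra hb
  obtain ⟨w, hw⟩ := hc
  have hwB : ∀ z ∈ w.bypass.support, z ∉ B := fun z hz => hw z (w.support_bypass_subset_support hz)
  have hEq := hB.2 _ Set.subset_union_left
    (hB.1.union_support w.bypass_isPath hwB hb₁ hb₂ hb h₁ h₂)
  exact hwB c₁ w.bypass.start_mem_support (hEq ▸ Or.inr w.bypass.start_mem_support)

lemma IsBlock.exists_isCutVertex_separating (hG : G.Connected) (hB : IsBlock G B)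
    (hBnt : B.Nontrivial) (hy : y ∉ B) :
    ∃ b ∈ B, IsCutVertex G b ∧ ∀ z ∈ B, z ≠ b → ¬ G.ReachIn {b}ᶜ y z := by
  obtain ⟨p, hp⟩ := hBnt.nonempty
  obtain ⟨c, b, hb, -, hcb, hyc⟩ :=
    (hG.preconnectedOn_univ y trivial p trivial).exists_adj_mem hy hp
  have hsep : ∀ z ∈ B, z ≠ b → ¬ G.ReachIn {b}ᶜ y z := by
    intro z hz hzb hyz
    obtain ⟨c', b', hb', hb'b, hcb', hyc'⟩ := hyz.exists_adj_mem hy hz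
    have hcc' : G.ReachIn Bᶜ c c' :=
      ((hyc.mono fun t ht => ht.2).symm.trans (hyc'.mono fun t ht => ht.2))
    exact hb'b (hB.eq_of_adj_of_adj hcc' hb hb' hcb hcb').symm
  obtain ⟨z, hz, hzb⟩ := hBnt.exists_ne b
  refine ⟨b, hb, isCutVertex_iff_exists_not_reachIn.mpr
    ⟨y, z, fun h => hy (h ▸ hb), hzb, hsep z hz hzb⟩, hsep⟩

end Block

section Leaves

variable [Fintype V] {b m v₂ y₂ v₃ y₃ : V}

lemma Connected.exists_isBlock_diff_subset_componentIn (hG : G.Connected) (hm : m ≠ b) :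
    ∃ B, IsBlock G B ∧ b ∈ B ∧ B.Nontrivial ∧ B \ {b} ⊆ G.componentIn {b}ᶜ m := by
  obtain ⟨z, hz, hzb⟩ := hG.exists_adj_mem_componentIn hm
  obtain ⟨B, hzbB, hB⟩ := (noCutVertexOn_pair hzb).exists_isBlock_superset
  have hzB : z ∈ B := hzbB (by simp)
  refine ⟨B, hB, hzbB (by simp), ⟨z, hzB, b, hzbB (by simp), hzb.ne⟩, ?_⟩
  rw [← componentIn_eq_of_mem hz]
  exact hB.1.diff_subset_componentIn hzB hzb.ne

/-- Let `B` be a block through `b` and a neighbour of `b` in the branch at `b` containing `m`.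
The branches at `v₂` and `v₃` avoid `B` and are cut off from it by cut vertices `b₂, b₃ ∈ B`;
as `B` holds at most two cut vertices, `b` among them, `b₂ = b₃`. -/
lemma Connected.exists_isCutVertex_separating_of_insert_subset (hG : G.Connected)
    (hblock : ∀ B : Set V, IsBlock G B → ({x ∈ B | IsCutVertex G x}).ncard ≤ 2)
    (hb : IsCutVertex G b) (hy₂ : y₂ ≠ v₂) (hy₃ : y₃ ≠ v₃)
    (h₂ : insert v₂ (G.componentIn {v₂}ᶜ y₂) ⊆ G.componentIn {b}ᶜ m)
    (h₃ : insert v₃ (G.componentIn {v₃}ᶜ y₃) ⊆ G.componentIn {b}ᶜ m) :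
    ∃ b', IsCutVertex G b' ∧ b' ∈ G.componentIn {b}ᶜ m ∧
      G.componentIn {v₂}ᶜ y₂ ⊆ {b'}ᶜ ∧ G.componentIn {v₃}ᶜ y₃ ⊆ {b'}ᶜ ∧
      ¬ G.ReachIn {b'}ᶜ y₂ b ∧ ¬ G.ReachIn {b'}ᶜ y₃ b := by
  set M := G.componentIn {b}ᶜ m
  have hbM : b ∉ M := fun h => (componentIn_subset h) rfl
  have hy₂M : y₂ ∈ M := h₂ (Set.mem_insert_of_mem _ (mem_componentIn_self hy₂))
  have hy₃M : y₃ ∈ M := h₃ (Set.mem_insert_of_mem _ (mem_componentIn_self hy₃))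
  obtain ⟨B, hB, hbB, hBnt, hBM⟩ :=
    hG.exists_isBlock_diff_subset_componentIn (hy₂M.mem_left : m ≠ b)
  have hBK : ∀ {v y}, insert v (G.componentIn {v}ᶜ y) ⊆ M → ∀ u ∈ B,
      u ∉ G.componentIn {v}ᶜ y := by
    intro v y hK u hu huK
    have hbv : b ≠ v := fun h => hbM (hK (h ▸ Set.mem_insert _ _))
    have := hB.1.diff_subset_componentIn hu (componentIn_subset huK) ⟨hbB, hbv⟩
    exact hbM (hK (Set.mem_insert_of_mem _ (componentIn_eq_of_mem huK ▸ this)))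
  obtain ⟨b₂, hb₂B, hb₂, hsep₂⟩ := hB.exists_isCutVertex_separating hG hBnt
    fun h => hBK h₂ y₂ h (mem_componentIn_self hy₂)
  obtain ⟨b₃, hb₃B, hb₃, hsep₃⟩ := hB.exists_isCutVertex_separating hG hBnt
    fun h => hBK h₃ y₃ h (mem_componentIn_self hy₃)
  obtain ⟨z, hzB, hzb⟩ := hBnt.exists_ne b
  have hbb' : ∀ {y b'}, y ∈ M → (∀ u ∈ B, u ≠ b' → ¬ G.ReachIn {b'}ᶜ y u) → b ≠ b' := by
    rintro y b' hyM hsep rfl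
    exact hsep z hzB hzb (ReachIn.trans (ReachIn.symm hyM) (hBM ⟨hzB, hzb⟩))
  obtain rfl : b₂ = b₃ := by
    by_contra hne
    have h3 : ({b, b₂, b₃} : Set V).ncard = 3 :=
      Set.ncard_eq_three.mpr ⟨b, b₂, b₃, hbb' hy₂M hsep₂, hbb' hy₃M hsep₃, hne, rfl⟩
    have hsub : ({b, b₂, b₃} : Set V) ⊆ {x ∈ B | IsCutVertex G x} := by
      rintro x (rfl | rfl | rfl)
      exacts [⟨hbB, hb⟩, ⟨hb₂B, hb₂⟩, ⟨hb₃B, hb₃⟩]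
    have := (Set.ncard_le_ncard hsub).trans (hblock B hB)
    omega
  have hbb₂ : b ≠ b₂ := hbb' hy₂M hsep₂
  exact ⟨b₂, hb₂, hBM ⟨hb₂B, hbb₂.symm⟩, fun u hu h => hBK h₂ b₂ hb₂B (h ▸ hu),
    fun u hu h => hBK h₃ b₂ hb₂B (h ▸ hu), hsep₂ b hbB hbb₂, hsep₃ b hbB hbb₂⟩

/-- The smaller branch is the one at `b'` containing `y₂`; it contains `y₃` as well, since `b'`
cuts off both from `b` and has only two branches. -/
lemma Connected.exists_componentIn_ssubset_of_insert_subset (hG : G.Connected)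
    (hcut2 : ∀ v : V, IsCutVertex G v →
      Nat.card ((G.induce ({v}ᶜ : Set V)).ConnectedComponent) = 2)
    (hblock : ∀ B : Set V, IsBlock G B → ({x ∈ B | IsCutVertex G x}).ncard ≤ 2)
    (hb : IsCutVertex G b) (hy₂ : y₂ ≠ v₂) (hy₃ : y₃ ≠ v₃)
    (hdisj : Disjoint (G.componentIn {v₂}ᶜ y₂) (G.componentIn {v₃}ᶜ y₃))
    (h₂ : insert v₂ (G.componentIn {v₂}ᶜ y₂) ⊆ G.componentIn {b}ᶜ m)
    (h₃ : insert v₃ (G.componentIn {v₃}ᶜ y₃) ⊆ G.componentIn {b}ᶜ m) :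
    ∃ b', IsCutVertex G b' ∧ insert v₂ (G.componentIn {v₂}ᶜ y₂) ⊆ G.componentIn {b'}ᶜ y₂ ∧
      insert v₃ (G.componentIn {v₃}ᶜ y₃) ⊆ G.componentIn {b'}ᶜ y₂ ∧
      G.componentIn {b'}ᶜ y₂ ⊂ G.componentIn {b}ᶜ m := by
  obtain ⟨b', hb', hb'M, hK₂, hK₃, hsep₂, hsep₃⟩ :=
    hG.exists_isCutVertex_separating_of_insert_subset hblock hb hy₂ hy₃ h₂ h₃
  set M' := G.componentIn {b'}ᶜ y₂
  have hbb' : b ≠ b' := fun h => componentIn_subset hb'M h.symm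
  have hy₂M : y₂ ∈ G.componentIn {b}ᶜ m := h₂ (Set.mem_insert_of_mem _ (mem_componentIn_self hy₂))
  have hy₂M' : y₂ ∈ M' := mem_componentIn_self (hK₂ (mem_componentIn_self hy₂))
  have hy₃M' : y₃ ∈ M' :=
    ((reachIn_or_reachIn_of_card_eq_two (hcut2 b' hb') (hK₃ (mem_componentIn_self hy₃)) hbb'
      (hK₂ (mem_componentIn_self hy₂)) fun h => hsep₂ h.symm).resolve_left hsep₃).symm
  have hM' : ∀ {v y}, y ∈ M' → v = b' → G.componentIn {v}ᶜ y = M' := by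
    rintro v y hy rfl
    exact componentIn_eq_of_mem hy
  have hv₂ : v₂ ≠ b' := fun h =>
    Set.disjoint_left.mp hdisj (hM' hy₂M' h ▸ hy₃M') (mem_componentIn_self hy₃)
  have hv₃ : v₃ ≠ b' := fun h =>
    Set.disjoint_left.mp hdisj (mem_componentIn_self hy₂) (hM' hy₃M' h ▸ hy₂M')
  refine ⟨b', hb', hG.insert_componentIn_subset hy₂ hv₂ hK₂ hy₂M',
    hG.insert_componentIn_subset hy₃ hv₃ hK₃ hy₃M', ⟨?_, fun h => ?_⟩⟩
  · exact componentIn_subset_componentIn_of_mem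
      (fun u hu (hub : u = b) => hsep₂ (hub ▸ hu)) hy₂M
  · exact componentIn_subset (h hb'M) rfl

lemma Connected.not_disjoint_of_insert_subset_componentIn (hG : G.Connected)
    (hcut2 : ∀ v : V, IsCutVertex G v →
      Nat.card ((G.induce ({v}ᶜ : Set V)).ConnectedComponent) = 2)
    (hblock : ∀ B : Set V, IsBlock G B → ({x ∈ B | IsCutVertex G x}).ncard ≤ 2)
    (hb : IsCutVertex G b) (hy₂ : y₂ ≠ v₂) (hy₃ : y₃ ≠ v₃)
    (h₂ : insert v₂ (G.componentIn {v₂}ᶜ y₂) ⊆ G.componentIn {b}ᶜ m)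
    (h₃ : insert v₃ (G.componentIn {v₃}ᶜ y₃) ⊆ G.componentIn {b}ᶜ m) :
    ¬ Disjoint (G.componentIn {v₂}ᶜ y₂) (G.componentIn {v₃}ᶜ y₃) := by
  intro hdisj
  let P : V × V → Prop := fun p => IsCutVertex G p.1 ∧
    insert v₂ (G.componentIn {v₂}ᶜ y₂) ⊆ G.componentIn {p.1}ᶜ p.2 ∧
    insert v₃ (G.componentIn {v₃}ᶜ y₃) ⊆ G.componentIn {p.1}ᶜ p.2
  obtain ⟨⟨b, m⟩, ⟨hb, h₂, h₃⟩, hmin⟩ := Set.Finite.exists_minimalFor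
    (fun p : V × V => (G.componentIn {p.1}ᶜ p.2).ncard) {p | P p} (Set.toFinite _)
    ⟨(b, m), hb, h₂, h₃⟩
  obtain ⟨b', hb', h₂', h₃', hM'⟩ :=
    hG.exists_componentIn_ssubset_of_insert_subset hcut2 hblock hb hy₂ hy₃ hdisj h₂ h₃
  have hlt := Set.ncard_lt_ncard hM'
  exact hlt.not_ge (hmin (show P (b', y₂) from ⟨hb', h₂', h₃'⟩) hlt.le)

lemma Connected.exists_pair_separated_by_isCutVertex (hG : G.Connected)
    (hcut2 : ∀ v : V, IsCutVertex G v →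
      Nat.card ((G.induce ({v}ᶜ : Set V)).ConnectedComponent) = 2)
    (hblock : ∀ B : Set V, IsBlock G B → ({x ∈ B | IsCutVertex G x}).ncard ≤ 2)
    (hV : 1 < Fintype.card V) :
    ∃ s t, s ≠ t ∧ ¬ IsCutVertex G s ∧ ¬ IsCutVertex G t ∧
      ∀ v, IsCutVertex G v → ¬ G.ReachIn {v}ᶜ s t := by
  by_cases hcut : ∀ v, ¬ IsCutVertex G v
  · obtain ⟨s, t, hst⟩ := Fintype.exists_pair_of_one_lt_card hV
    exact ⟨s, t, hst, hcut s, hcut t, fun v hv => absurd hv (hcut v)⟩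
  obtain ⟨v₀, hv₀⟩ := not_forall_not.mp hcut
  obtain ⟨x₀, hx₀, -⟩ := hv₀.exists_not_reachIn v₀
  obtain ⟨vs, s, hvs, hs, -, hKs⟩ := hG.exists_componentIn_subset_not_isCutVertex hv₀ hx₀
  obtain ⟨u, hu, hsu⟩ := hvs.exists_not_reachIn s
  obtain ⟨vt, t, hvt, ht, hKtu, hKt⟩ := hG.exists_componentIn_subset_not_isCutVertex hvs hu
  have hsKs := mem_componentIn_self (G := G) (S := {vs}ᶜ) hs
  have htKt := mem_componentIn_self (G := G) (S := {vt}ᶜ) ht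
  have hdisj : Disjoint (G.componentIn {vs}ᶜ s) (G.componentIn {vt}ᶜ t) :=
    Set.disjoint_left.mpr fun z hzs hzt => hsu (ReachIn.trans hzs (ReachIn.symm (hKtu hzt)))
  refine ⟨s, t, fun h => Set.disjoint_left.mp hdisj hsKs (h ▸ htKt), hKs s hsKs, hKt t htKt,
    fun v hv hst => ?_⟩
  have hvs' : vs ≠ v := by
    rintro rfl
    exact hsu (hst.trans (ReachIn.symm (hKtu htKt)))
  have hvt' : vt ≠ v := by
    rintro rfl
    exact hsu (ReachIn.symm (hKtu (ReachIn.symm hst)))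
  have hK : ∀ {w y}, (∀ z ∈ G.componentIn {w}ᶜ y, ¬ IsCutVertex G z) → y ≠ w → w ≠ v →
      y ∈ G.componentIn {v}ᶜ s → insert w (G.componentIn {w}ᶜ y) ⊆ G.componentIn {v}ᶜ s :=
    fun hfree hy hwv hyM =>
      hG.insert_componentIn_subset hy hwv (fun z hz (hzv : z = v) => hfree z hz (hzv ▸ hv)) hyM
  exact hG.not_disjoint_of_insert_subset_componentIn hcut2 hblock hv hs ht
    (hK hKs hs hvs' (mem_componentIn_self hst.mem_left)) (hK hKt ht hvt' hst) hdisj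

end Leaves

lemma reachesEndsAfterDeletion_univ [Fintype V] {s t : V}
    (hcut2 : ∀ v : V, IsCutVertex G v →
      Nat.card ((G.induce ({v}ᶜ : Set V)).ConnectedComponent) = 2)
    (hst : s ≠ t) (hs : ¬ IsCutVertex G s) (ht : ¬ IsCutVertex G t)
    (hsep : ∀ v, IsCutVertex G v → ¬ G.ReachIn {v}ᶜ s t) :
    G.ReachesEndsAfterDeletion Set.univ s {t} := by
  intro v _ x hx
  rw [← Set.compl_eq_univ_sdiff]
  have hxv : x ≠ v := hx.2
  by_cases hv : IsCutVertex G v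
  · have hsv : s ≠ v := by rintro rfl; exact hs hv
    have htv : t ≠ v := by rintro rfl; exact ht hv
    rcases reachIn_or_reachIn_of_card_eq_two (hcut2 v hv) hxv hsv htv (hsep v hv) with h | h
    exacts [.inl h, .inr ⟨t, rfl, h⟩]
  · by_cases hvs : v = s
    · subst hvs
      exact .inr ⟨t, rfl, reachIn_of_not_isCutVertex hv hxv hst.symm⟩
    · exact .inl (reachIn_of_not_isCutVertex hv hxv (Ne.symm hvs))

end SimpleGraph

theorem stmt3 {V : Type*} [Fintype V] (G : SimpleGraph V) (hG : G.Connected)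
    (hcut2 : ∀ v : V, IsCutVertex G v →
      Nat.card ((G.induce ({v}ᶜ : Set V)).ConnectedComponent) = 2)
    (hblock : ∀ B : Set V, IsBlock G B → ({x ∈ B | IsCutVertex G x}).ncard ≤ 2) :
    ∃ e : Fin (Fintype.card V) ≃ V,
      ∀ i : Fin (Fintype.card V), (i : ℕ) < Fintype.card V - 1 →
        (G.induce {x : V | ∃ j : Fin (Fintype.card V), j ≤ i ∧ e j = x}).Connected ∧
        (G.induce {x : V | ∃ j : Fin (Fintype.card V), i < j ∧ e j = x}).Connected := by
  rcases lt_or_ge (Fintype.card V) 2 with hV | hV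
  · exact ⟨(Fintype.equivFin V).symm, fun i hi => absurd hi (by omega)⟩
  obtain ⟨s, t, hst, hs, ht, hsep⟩ := hG.exists_pair_separated_by_isCutVertex hcut2 hblock hV
  obtain ⟨l, hnd, hl, hpre, hsuf⟩ :=
    (reachesEndsAfterDeletion_univ hcut2 hst hs ht hsep).exists_isTargetOrdering
      hG.preconnectedOn_univ (Set.mem_univ s)
  obtain ⟨e, he⟩ := hnd.exists_finEquiv_take_drop fun z => (hl z).mpr trivial
  refine ⟨e, fun i hi => ?_⟩
  have hi' : i.val + 1 < Fintype.card V := by omega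
  rw [connected_induce_iff_preconnectedOn, connected_induce_iff_preconnectedOn]
  refine ⟨⟨⟨e i, i, le_rfl, rfl⟩, ?_⟩,
    ⟨⟨e ⟨i + 1, hi'⟩, ⟨i + 1, hi'⟩, Fin.lt_def.mpr (Nat.lt_succ_self _), rfl⟩, ?_⟩⟩
  · rw [(he i).1]
    exact hpre _ i.val.succ_pos
  · rw [(he i).2]
    refine .of_reachIn (v := t) fun x hx => ?_
    obtain ⟨a, rfl, hxa⟩ := hsuf _ i.val.succ_pos x hx
    exact hxa
end

section
/- Let a, b, k be nonnegative integers with k ≥ 1 satisfying C(a+b, k) ≤ b − a + 1 (where b − a + 1 is interpreted as an integer inequality, i.e., C(a+b,k) + a ≤ b + 1). Then 2a ≤ k. -/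
theorem Nat.le_choose_of_pos_of_lt {n k : ℕ} (hk : 0 < k) (hkn : k < n) : n ≤ n.choose k := by
  induction n generalizing k with
  | zero => omega
  | succ n ih =>
    obtain ⟨j, rfl⟩ : ∃ j, k = j + 1 := ⟨k - 1, by omega⟩
    rcases Nat.eq_zero_or_pos j with rfl | hj
    · simp
    · have hn : n ≤ n.choose j := ih hj (by omega)
      have hpos : 0 < n.choose (j + 1) := Nat.choose_pos (by omega)
      rw [Nat.choose_succ_succ']
      omega

theorem stmt4 (a b k : ℕ) (hk : 1 ≤ k)
    (h : Nat.choose (a + b) k + a ≤ b + 1) : 2 * a ≤ k := by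
  rcases lt_trichotomy k (a + b) with hlt | rfl | hgt
  · have := Nat.le_choose_of_pos_of_lt hk hlt
    omega
  · rw [Nat.choose_self] at h
    omega
  · rw [Nat.choose_eq_zero_of_lt hgt] at h
    omega
end

section
/- Let H be a finite graph on vertex set V with |V| = n, and suppose the complement of H contains no complete bipartite subgraph K_{m,m} between two disjoint vertex sets of size m each. If K is an induced subgraph of H all of whose connected components have fewer than m vertices, and K has at least m vertices, then K has fewer than 3m vertices. -/
open SimpleGraph

/-- The complement of `H` contains no complete bipartite subgraph `K_{m,m}`:
there are no disjoint vertex sets `A`, `B` of size `m` each with no edge of `H`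
joining `A` to `B`. -/
def NoKmmInComplement {V : Type*} (H : SimpleGraph V) (m : ℕ) : Prop :=
  ¬ ∃ A B : Finset V, Disjoint A B ∧ A.card = m ∧ B.card = m ∧
      ∀ a ∈ A, ∀ b ∈ B, ¬ H.Adj a b

lemma greedy_aux {ι : Type*} [DecidableEq ι] (m : ℕ) (hm : 0 < m) :
    ∀ (T : Finset ι) (f : ι → ℕ), (∀ i ∈ T, f i < m) → m ≤ ∑ i ∈ T, f i →
    ∃ U ⊆ T, m ≤ ∑ i ∈ U, f i ∧ ∑ i ∈ U, f i < 2 * m := by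
  intro T
  induction T using Finset.strongInduction with
  | _ T ih =>
    intro f hf hsum
    by_cases h : ∑ i ∈ T, f i < 2 * m
    · exact ⟨T, Finset.Subset.refl T, hsum, h⟩
    · push_neg at h
      obtain ⟨i, hi⟩ : T.Nonempty := by
        rcases T.eq_empty_or_nonempty with rfl | hne
        · simp only [Finset.sum_empty] at hsum; omega
        · exact hne
      have hadd : ∑ j ∈ T.erase i, f j + f i = ∑ j ∈ T, f j :=
        Finset.sum_erase_add T f hi
      have hfi : f i < m := hf i hi
      have hm' : m ≤ ∑ j ∈ T.erase i, f j := by omega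
      obtain ⟨U, hU, h1, h2⟩ := ih (T.erase i) (Finset.erase_ssubset hi) f
        (fun j hj => hf j (Finset.mem_of_mem_erase hj)) hm'
      exact ⟨U, hU.trans (Finset.erase_subset i T), h1, h2⟩

theorem stmt6 {V : Type*} [Fintype V] (H : SimpleGraph V) (m : ℕ)
    (hH : NoKmmInComplement H m) (S : Set V)
    (hcomp : ∀ c : (H.induce S).ConnectedComponent, Nat.card c.supp < m)
    (hS : m ≤ S.ncard) :
    S.ncard < 3 * m := by
  classical
  by_contra hge
  push_neg at hge
  have hm : 0 < m := by
    rcases Nat.eq_zero_or_pos m with rfl | h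
    · exact (hH ⟨∅, ∅, Finset.disjoint_empty_left _, rfl, rfl, by simp⟩).elim
    · exact h
  set G := H.induce S with hG
  haveI : Fintype ↥S := (Set.toFinite S).fintype
  haveI : Finite G.ConnectedComponent := Quot.finite _
  haveI : Fintype G.ConnectedComponent := Fintype.ofFinite _
  -- fibers
  set F : G.ConnectedComponent → Finset ↥S :=
    fun c => Finset.univ.filter (fun v => G.connectedComponentMk v = c) with hF
  have hFcard : ∀ c, (F c).card = Nat.card c.supp := by
    intro c
    have : c.supp.toFinset = F c := by
      ext v
      simp [hF, ConnectedComponent.mem_supp_iff]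
    rw [Nat.card_eq_card_toFinset, this]
  have hcardS : S.ncard = Fintype.card ↥S := by
    rw [Set.ncard_eq_toFinset_card', Set.toFinset_card]
  have hsumF : Fintype.card ↥S = ∑ c, (F c).card := by
    rw [← Finset.card_univ]
    exact Finset.card_eq_sum_card_fiberwise (fun v _ => Finset.mem_univ _)
  have hsum_ge : m ≤ ∑ c, (F c).card := by
    rw [← hsumF, ← hcardS]; exact hS
  obtain ⟨U, hUsub, hU1, hU2⟩ := greedy_aux m hm Finset.univ (fun c => (F c).card)
    (fun c _ => by simpa [hFcard] using hcomp c) hsum_ge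
  set A0 : Finset ↥S := U.biUnion F with hA0
  have hA0card : A0.card = ∑ c ∈ U, (F c).card := by
    apply Finset.card_biUnion
    intro c hc d hd hcd
    simp only [Finset.disjoint_left, hF, Finset.mem_filter]
    rintro v ⟨-, hv⟩ ⟨-, hv'⟩
    exact hcd (hv ▸ hv')
  have hB0card : m ≤ (Finset.univ \ A0).card := by
    have := Finset.card_sdiff_add_card_eq_card (Finset.subset_univ A0)
    have hcu : 3 * m ≤ (Finset.univ : Finset ↥S).card := by
      rw [Finset.card_univ, ← hcardS]; exact hge
    omega
  have hA0m : m ≤ A0.card := by rw [hA0card]; exact hU1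
  obtain ⟨A', hA'sub, hA'card⟩ := Finset.exists_subset_card_eq hA0m
  obtain ⟨B', hB'sub, hB'card⟩ := Finset.exists_subset_card_eq hB0card
  apply hH
  refine ⟨A'.image Subtype.val, B'.image Subtype.val, ?_, ?_, ?_, ?_⟩
  · rw [Finset.disjoint_image Subtype.val_injective]
    exact Finset.disjoint_left.mpr fun x hx hx' =>
      (Finset.mem_sdiff.mp (hB'sub hx')).2 (hA'sub hx)
  · rw [Finset.card_image_of_injective _ Subtype.val_injective, hA'card]
  · rw [Finset.card_image_of_injective _ Subtype.val_injective, hB'card]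
  · intro a ha b hb hadj
    obtain ⟨x, hx, rfl⟩ := Finset.mem_image.mp ha
    obtain ⟨y, hy, rfl⟩ := Finset.mem_image.mp hb
    have hxA0 := hA'sub hx
    have hyB0 := hB'sub hy
    obtain ⟨c, hcU, hxc⟩ := Finset.mem_biUnion.mp hxA0
    have hxc : G.connectedComponentMk x = c := by
      simpa [hF] using hxc
    have hynot : y ∉ A0 := (Finset.mem_sdiff.mp hyB0).2
    have hyU : G.connectedComponentMk y ∉ U := by
      intro hcon
      exact hynot (Finset.mem_biUnion.mpr ⟨_, hcon, Finset.mem_filter.mpr ⟨Finset.mem_univ y, rfl⟩⟩)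
    exact hyU (by
      have hadj' : G.Adj y x := by
        rw [hG, comap_adj]; exact hadj.symm
      have hreach : G.Reachable y x := hadj'.reachable
      have heq : G.connectedComponentMk y = G.connectedComponentMk x :=
        ConnectedComponent.sound hreach
      rw [heq, hxc]; exact hcU)
end

section
/- Let H be a finite graph whose complement contains no complete bipartite subgraph K_{m,m} (between disjoint vertex sets of size m each). Let K be an induced subgraph of H, all of whose connected components have fewer than m vertices, and suppose K has at least m vertices. Then there exists a union L of some components of K such that m ≤ |L| < 2m and |V(K) ∖ L| < m. -/
open SimpleGraph

/-!
Add components of `K` one at a time until the union `L` first reaches `m` vertices; since the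
last component added has fewer than `m` vertices, `|L| < 2m`. There are no edges of `H` between
`L` and `V(K) \ L`, so `m` vertices of `L` and `m` vertices of `V(K) \ L` would span a `K_{m,m}`
in the complement; hence `|V(K) \ L| < m`.
-/

theorem Finset.exists_subset_le_sum_lt_add {ι M : Type*} [AddCommMonoid M] [LinearOrder M]
    [IsOrderedCancelAddMonoid M] {s : Finset ι} {w : ι → M} {m k : M} (hm : 0 < m)
    (hw : ∀ i ∈ s, w i < k) (hs : m ≤ ∑ i ∈ s, w i) :
    ∃ t ⊆ s, m ≤ ∑ i ∈ t, w i ∧ ∑ i ∈ t, w i < m + k := by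
  classical
  induction s using Finset.induction_on with
  | empty => exact absurd hs (by simpa using hm)
  | insert a s ha ih =>
    by_cases hsm : m ≤ ∑ i ∈ s, w i
    · obtain ⟨t, hts, ht⟩ := ih (fun i hi => hw i (mem_insert_of_mem hi)) hsm
      exact ⟨t, hts.trans (subset_insert a s), ht⟩
    · refine ⟨insert a s, Subset.rfl, hs, ?_⟩
      rw [sum_insert ha, add_comm m]
      exact add_lt_add (hw a (mem_insert_self a s)) (not_le.mp hsm)

namespace SimpleGraph

theorem ncard_preimage_connectedComponentMk {W : Type*} [Finite W] (G : SimpleGraph W)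
    (T : Finset G.ConnectedComponent) :
    (G.connectedComponentMk ⁻¹' T).ncard = ∑ c ∈ T, Nat.card c.supp := by
  classical
  cases nonempty_fintype W
  rw [Set.ncard_eq_toFinset_card', Finset.card_eq_sum_card_fiberwise (f := G.connectedComponentMk)
    (t := T) (fun v hv => by simpa using hv)]
  refine Finset.sum_congr rfl fun c hc => ?_
  rw [Nat.card_eq_card_toFinset]
  congr 1
  ext v
  simp only [Finset.mem_filter, Set.mem_toFinset, Set.mem_preimage, Finset.mem_coe,
    ConnectedComponent.mem_supp_iff, and_iff_right_iff_imp]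
  rintro rfl
  exact hc

end SimpleGraph

namespace NoKmmInComplement

variable {V : Type*} {H : SimpleGraph V} {m : ℕ}

theorem pos (hH : NoKmmInComplement H m) : 0 < m :=
  Nat.pos_of_ne_zero fun hm => hH ⟨∅, ∅, by simp [hm]⟩

theorem ncard_lt_of_forall_not_adj (hH : NoKmmInComplement H m) {A B : Set V}
    (hAB : Disjoint A B) (hadj : ∀ a ∈ A, ∀ b ∈ B, ¬ H.Adj a b) (hA : m ≤ A.ncard) :
    B.ncard < m := by
  by_contra! hB
  obtain ⟨A', hA'A, hA'⟩ := Set.exists_subset_card_eq hA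
  obtain ⟨B', hB'B, hB'⟩ := Set.exists_subset_card_eq hB
  have hA'fin := Set.finite_of_ncard_pos (hA' ▸ hH.pos)
  have hB'fin := Set.finite_of_ncard_pos (hB' ▸ hH.pos)
  refine hH ⟨hA'fin.toFinset, hB'fin.toFinset, ?_, ?_, ?_, ?_⟩
  · exact Set.Finite.disjoint_toFinset.mpr (hAB.mono hA'A hB'B)
  · rwa [← Set.ncard_eq_toFinset_card _ hA'fin]
  · rwa [← Set.ncard_eq_toFinset_card _ hB'fin]
  · simp only [Set.Finite.mem_toFinset]
    exact fun a ha b hb => hadj a (hA'A ha) b (hB'B hb)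

end NoKmmInComplement

theorem stmt7 {V : Type*} [Fintype V] (H : SimpleGraph V) (m : ℕ)
    (hH : NoKmmInComplement H m) (S : Set V)
    (hcomp : ∀ c : (H.induce S).ConnectedComponent, Nat.card c.supp < m)
    (hS : m ≤ S.ncard) :
    ∃ L : Set V, L ⊆ S ∧
      (∀ x y : S, (x : V) ∈ L → (H.induce S).Reachable x y → (y : V) ∈ L) ∧
      m ≤ L.ncard ∧ L.ncard < 2 * m ∧ (S \ L).ncard < m := by
  classical
  set G := H.induce S
  have htotal : m ≤ ∑ c : G.ConnectedComponent, Nat.card c.supp := by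
    rwa [← G.ncard_preimage_connectedComponentMk, Finset.coe_univ, Set.preimage_univ,
      Set.ncard_univ, Nat.card_coe_set_eq]
  obtain ⟨T, -, hTm, hT2m⟩ := Finset.exists_subset_le_sum_lt_add hH.pos
    (fun c _ => hcomp c) htotal
  set L : Set V := Subtype.val '' (G.connectedComponentMk ⁻¹' T)
  have hLcard : L.ncard = ∑ c ∈ T, Nat.card c.supp := by
    rw [Set.ncard_image_of_injective _ Subtype.val_injective,
      G.ncard_preimage_connectedComponentMk]
  have hclosed : ∀ x y : S, (x : V) ∈ L → G.Reachable x y → (y : V) ∈ L := by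
    intro x y hx hxy
    rw [Subtype.val_injective.mem_set_image] at hx ⊢
    rwa [Set.mem_preimage, ← ConnectedComponent.sound hxy]
  refine ⟨L, Subtype.coe_image_subset S _, hclosed, hLcard ▸ hTm, two_mul m ▸ hLcard ▸ hT2m, ?_⟩
  refine hH.ncard_lt_of_forall_not_adj Set.disjoint_sdiff_right ?_ (hLcard ▸ hTm)
  rintro a ⟨a, ha, rfl⟩ b ⟨hbS, hbL⟩ hab
  exact hbL (hclosed a ⟨b, hbS⟩ ⟨a, ha, rfl⟩ (Adj.reachable (by simpa [G] using hab)))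
end
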